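/- arXiv:2604.10479 — 3 statements merged into one kernel-verified Lean document; each statement's English description precedes it below -/
import Mathlib

section
/- There is an absolute constant N such that the following holds for every n ≥ N, all positive integers k and w, and every integer t with 1 ≤ t ≤ 2^w/(⌈log₂ n⌉)^2. Let R^{(1)}, …, R^{(k)} ∈ F_2^{t × 2^w} be independent uniformly random matrices, each conditioned on having exactly one nonzero entry per row, and let R = [R^{(1)} ‖ … ‖ R^{(k)}] be their horizontal concatenation. Then with probability at least 1 − 2^{−k t/√⌈log₂ n⌉}, the coordinatewise logical OR of all t rows of R has Hamming weight strictly greater than (1 − 1/√⌈log₂ n⌉)·k·t. -/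
/-!
Call `(i, a)` a collision of `r` if row `a` of block `i` hits the same column as an earlier row
of that block. Distinct non-collisions hit distinct columns, so an OR of weight at most
`(1 - 1/s)·k·t` forces at least `d = ⌈k t / s⌉` collisions, where `s = √⌈log₂ n⌉ ≥ 2` for
`n ≥ 16`. A matrix with a prescribed set `S` of collisions is determined by its entries off `S`
and, for each collision, the earlier row it repeats; hence there are at most
`C(kt, d) · t^d · (2^w)^(kt - d)` bad matrices. With `C(kt, d) ≤ (e s)^d` and `t ≤ 2^w / s^4`
this is at most `(e / s^3)^d (2^w)^(kt) ≤ 2^(-d) (2^w)^(kt)`.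
-/

open Finset

section Collisions

variable {ι κ α : Type*} [Fintype ι] [Fintype κ] [LinearOrder κ] [DecidableEq α]

def collisions (r : ι → κ → α) : Finset (ι × κ) :=
  {p | ∃ b < p.2, r p.1 b = r p.1 p.2}

lemma mem_collisions {r : ι → κ → α} {p : ι × κ} :
    p ∈ collisions r ↔ ∃ b < p.2, r p.1 b = r p.1 p.2 := by
  simp [collisions]

lemma card_le_card_hits_add_card_collisions [DecidableEq ι] [Fintype α] (r : ι → κ → α) :
    Fintype.card ι * Fintype.card κ ≤
      Nat.card {ic : ι × α // ∃ a, r ic.1 a = ic.2} + #(collisions r) := by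
  have hinj : Function.Injective fun p : {p // p ∉ collisions r} =>
      (⟨(p.1.1, r p.1.1 p.1.2), p.1.2, rfl⟩ : {ic : ι × α // ∃ a, r ic.1 a = ic.2}) := by
    rintro ⟨⟨i, a⟩, ha⟩ ⟨⟨i', a'⟩, ha'⟩ h
    simp only [Subtype.mk.injEq, Prod.mk.injEq] at h
    obtain ⟨rfl, h⟩ := h
    simp only [mem_collisions, not_exists, not_and] at ha ha'
    rcases lt_trichotomy a a' with hlt | rfl | hgt
    · exact absurd h (ha' a hlt)
    · rfl
    · exact absurd h.symm (ha a' hgt)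
  have := Nat.card_le_card_of_injective _ hinj
  rw [Nat.card_eq_fintype_card, Fintype.card_subtype_compl, Fintype.card_coe,
    Fintype.card_prod] at this
  omega

lemma card_subset_collisions_le [DecidableEq ι] [Fintype α] (S : Finset (ι × κ)) :
    #{r : ι → κ → α | S ⊆ collisions r} ≤
      Fintype.card κ ^ #S * Fintype.card α ^ (Fintype.card ι * Fintype.card κ - #S) := by
  let encode (r : {r : ι → κ → α // S ⊆ collisions r}) : (S → κ) × ({p // p ∉ S} → α) :=
    (fun p => (mem_collisions.1 (r.2 p.2)).choose, fun p => r.1 p.1.1 p.1.2)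
  have hinj : Function.Injective encode := by
    rintro ⟨r, hr⟩ ⟨r', hr'⟩ h
    simp only [encode, Prod.mk.injEq, funext_iff] at h
    suffices ∀ a i, r i a = r' i a from Subtype.ext (funext fun i => funext fun a => this a i)
    intro a
    induction a using WellFoundedLT.induction with
    | ind a ih =>
      intro i
      by_cases hS : (i, a) ∈ S
      · have hb := (mem_collisions.1 (hr hS)).choose_spec
        have hb' := (mem_collisions.1 (hr' hS)).choose_spec
        rw [← hb.2, ← hb'.2, ← h.1 ⟨_, hS⟩]
        exact ih _ hb.1 i
      · exact h.2 ⟨_, hS⟩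
  rw [← Fintype.card_subtype]
  refine (Fintype.card_le_of_injective encode hinj).trans_eq ?_
  simp [Fintype.card_subtype_compl]

lemma card_le_card_collisions_le [DecidableEq ι] [Fintype α] (d : ℕ) :
    #{r : ι → κ → α | d ≤ #(collisions r)} ≤
      (Fintype.card ι * Fintype.card κ).choose d *
        (Fintype.card κ ^ d * Fintype.card α ^ (Fintype.card ι * Fintype.card κ - d)) := by
  have hsub : ({r | d ≤ #(collisions r)} : Finset (ι → κ → α)) ⊆
      (powersetCard d univ).biUnion fun S => ({r | S ⊆ collisions r} : Finset (ι → κ → α)) := by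
    intro r hr
    obtain ⟨S, hS, rfl⟩ := exists_subset_card_eq (mem_filter.1 hr).2
    simp only [mem_biUnion, mem_powersetCard, mem_filter]
    exact ⟨S, ⟨subset_univ S, rfl⟩, mem_univ r, hS⟩
  calc _ ≤ _ := card_le_card hsub
    _ ≤ ∑ S ∈ powersetCard d (univ : Finset (ι × κ)), #{r : ι → κ → α | S ⊆ collisions r} :=
      card_biUnion_le
    _ ≤ ∑ _S ∈ powersetCard d (univ : Finset (ι × κ)),
        Fintype.card κ ^ d * Fintype.card α ^ (Fintype.card ι * Fintype.card κ - d) :=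
      sum_le_sum fun S hS => (mem_powersetCard.1 hS).2 ▸ card_subset_collisions_le S
    _ = _ := by simp

end Collisions

lemma Nat.choose_le_exp_one_mul_pow {N d : ℕ} {s : ℝ} (hs : 0 ≤ s) (hN : (N : ℝ) ≤ d * s) :
    (N.choose d : ℝ) ≤ (Real.exp 1 * s) ^ d :=
  calc (N.choose d : ℝ) ≤ N ^ d / d.factorial := Nat.choose_le_pow_div d N
    _ ≤ (d * s) ^ d / d.factorial := by gcongr
    _ = s ^ d * ((d : ℝ) ^ d / d.factorial) := by ring
    _ ≤ s ^ d * Real.exp d := by gcongr; exact Real.pow_div_factorial_le_exp _ d.cast_nonneg d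
    _ = (Real.exp 1 * s) ^ d := by rw [mul_pow, Real.exp_one_pow, mul_comm]

theorem card_low_weight_le {ι κ α : Type*} [Fintype ι] [DecidableEq ι] [Fintype κ]
    [LinearOrder κ] [Fintype α] [DecidableEq α] {s : ℝ} (hs : 2 ≤ s)
    (hκ : Fintype.card κ * s ^ 4 ≤ Fintype.card α) :
    (#{r : ι → κ → α | (Nat.card {ic : ι × α // ∃ a, r ic.1 a = ic.2} : ℝ) ≤
        (1 - 1 / s) * (Fintype.card ι * Fintype.card κ : ℕ)} : ℝ) ≤
      2 ^ (-((Fintype.card ι * Fintype.card κ : ℕ) : ℝ) / s) *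
        Fintype.card α ^ (Fintype.card ι * Fintype.card κ) := by
  set N := Fintype.card ι * Fintype.card κ
  set A := Fintype.card α
  set d := ⌈(N : ℝ) / s⌉₊
  have hs0 : 0 < s := by linarith
  have hNd : (N : ℝ) ≤ d * s := (div_le_iff₀ hs0).1 (Nat.le_ceil _)
  have hdN : d ≤ N := Nat.ceil_le.2 (div_le_self N.cast_nonneg (by linarith))
  have hsub : ({r | (Nat.card {ic : ι × α // ∃ a, r ic.1 a = ic.2} : ℝ) ≤ (1 - 1 / s) * N} :
      Finset (ι → κ → α)) ⊆ ({r | d ≤ #(collisions r)} : Finset (ι → κ → α)) := by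
    intro r hr
    simp only [mem_filter, mem_univ, true_and] at hr ⊢
    have hcount : (N : ℝ) ≤ Nat.card {ic : ι × α // ∃ a, r ic.1 a = ic.2} + #(collisions r) :=
      mod_cast card_le_card_hits_add_card_collisions r
    refine Nat.ceil_le.2 ?_
    have : (N : ℝ) / s = N - (1 - 1 / s) * N := by field_simp; ring
    linarith
  have hK : (Fintype.card κ : ℝ) ≤ A / s ^ 4 := by rwa [le_div_iff₀ (by positivity)]
  have hes : Real.exp 1 / s ^ 3 ≤ 1 / 2 := by
    rw [div_le_div_iff₀ (by positivity) two_pos]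
    nlinarith [Real.exp_one_lt_d9, pow_le_pow_left₀ zero_le_two hs 3]
  calc (#{r : ι → κ → α | (Nat.card {ic : ι × α // ∃ a, r ic.1 a = ic.2} : ℝ) ≤
        (1 - 1 / s) * N} : ℝ)
      ≤ #{r : ι → κ → α | d ≤ #(collisions r)} := mod_cast card_le_card hsub
    _ ≤ N.choose d * (Fintype.card κ ^ d * A ^ (N - d)) :=
        mod_cast card_le_card_collisions_le d
    _ ≤ (Real.exp 1 * s) ^ d * ((A / s ^ 4) ^ d * A ^ (N - d)) := by
        gcongr
        exact Nat.choose_le_exp_one_mul_pow hs0.le hNd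
    _ = (Real.exp 1 / s ^ 3 * A) ^ d * A ^ (N - d) := by
        rw [← mul_assoc, ← mul_pow]
        congr 2
        field_simp
    _ = (Real.exp 1 / s ^ 3) ^ d * (A ^ d * A ^ (N - d)) := by rw [mul_pow, mul_assoc]
    _ ≤ (1 / 2) ^ d * A ^ N := by
        rw [pow_mul_pow_sub _ hdN]
        gcongr
    _ ≤ 2 ^ (-(N : ℝ) / s) * A ^ N := by
        gcongr
        rw [one_div, inv_pow, ← Real.rpow_natCast, ← Real.rpow_neg zero_le_two, neg_div]
        exact Real.rpow_le_rpow_of_exponent_le one_le_two (neg_le_neg (Nat.le_ceil _))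

lemma one_sub_le_card_subtype_div {X : Type*} [Fintype X] [Nonempty X] (p : X → Prop)
    [DecidablePred p] {q : ℝ} (h : (#{x | ¬ p x} : ℝ) ≤ q * Fintype.card X) :
    1 - q ≤ Nat.card {x // p x} / Nat.card X := by
  have hsplit : (#{x | p x} : ℝ) + #{x | ¬ p x} = Fintype.card X :=
    mod_cast (card_filter_add_card_filter_not p).trans card_univ
  rw [Nat.card_eq_fintype_card, Fintype.card_subtype, Nat.card_eq_fintype_card,
    le_div_iff₀ (mod_cast Fintype.card_pos), sub_mul, one_mul]
  linarith

/-- There is an absolute constant `N` such that for every `n ≥ N`,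
all positive `k, w` and every `t` with `1 ≤ t ≤ 2^w / (⌈log₂ n⌉)²`:
if `R^{(1)}, …, R^{(k)} ∈ F_2^{t × 2^w}` are independent uniform matrices each with
exactly one nonzero entry per row (encoded by the position `r i a ∈ Fin (2^w)` of
the nonzero entry of row `a` of `R^{(i)}`), then with probability at least
`1 − 2^{−kt/√⌈log₂ n⌉}` the coordinatewise OR of all `t` rows of the concatenation
`R = [R^{(1)} ‖ … ‖ R^{(k)}]` (whose columns are indexed by `Fin k × Fin (2^w)`)
has Hamming weight strictly greater than `(1 − 1/√⌈log₂ n⌉)·k·t`. -/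
theorem stmt2 : ∃ N : ℕ, ∀ n : ℕ, N ≤ n → ∀ k w t : ℕ, 0 < k → 0 < w → 0 < t →
    (t : ℝ) ≤ (2 : ℝ) ^ w / (Nat.clog 2 n : ℝ) ^ 2 →
    1 - (2 : ℝ) ^ (-((k * t : ℕ) : ℝ) / Real.sqrt (Nat.clog 2 n)) ≤
      (Nat.card {r : Fin k → Fin t → Fin (2 ^ w) //
          ((1 - 1 / Real.sqrt (Nat.clog 2 n)) * k * t : ℝ) <
            (Nat.card {ic : Fin k × Fin (2 ^ w) // ∃ a : Fin t, r ic.1 a = ic.2} : ℝ)} : ℝ) /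
        (Nat.card (Fin k → Fin t → Fin (2 ^ w)) : ℝ) := by
  refine ⟨2 ^ 4, fun n hn k w t _ _ _ ht => ?_⟩
  set L := Nat.clog 2 n
  have hL : (4 : ℝ) ≤ L :=
    mod_cast (Nat.clog_pow 2 4 one_lt_two).symm.trans_le (Nat.clog_mono_right 2 hn)
  have hs : 2 ≤ Real.sqrt L := Real.le_sqrt_of_sq_le (by linarith)
  have hs4 : Real.sqrt L ^ 4 = (L : ℝ) ^ 2 := by
    rw [show 4 = 2 * 2 from rfl, pow_mul, Real.sq_sqrt (by positivity)]
  have hbad := card_low_weight_le (ι := Fin k) (κ := Fin t) (α := Fin (2 ^ w)) hs (by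
    simp only [Fintype.card_fin, Nat.cast_pow, Nat.cast_ofNat, hs4]
    exact (le_div_iff₀ (by positivity)).1 ht)
  refine one_sub_le_card_subtype_div _ ?_
  simpa [not_lt, mul_assoc, ← pow_mul, mul_comm t k] using hbad
end

section
/- There is an absolute constant N such that the following holds for all n ≥ N and all constants c_m ≥ 2, c_k ≥ c_m + 1 (with n large enough that k < n and k·2^w ≤ n). Fix any set T ⊆ F_2^{log₂ m} of row indices with 1 ≤ |T| ≤ 2^w/(⌈log₂ n⌉)^2, and draw the k·w polynomials g^{(i,j)} independently and uniformly at random from the polynomials F_2^{log₂ m} → F_2 of total degree at most ⌈log₂ n⌉. Then with probability at least 1 − 2^{−k|T|/√⌈log₂ n⌉}, the coordinatewise logical OR of the rows of M = [M^{(1)} ‖ … ‖ M^{(k)}] indexed by T has Hamming weight strictly greater than (1 − 1/√⌈log₂ n⌉)·k·|T|. -/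
open Finset

/-- Coefficient space for (multilinear representatives of) polynomials over `F_2`
in `d` variables of total degree at most `r`; a uniformly random such coefficient
vector corresponds to a uniformly random polynomial of total degree at most `r`,
viewed as a function `F_2^d → F_2`. -/
abbrev CoefSp (d r : ℕ) := {S : Finset (Fin d) // S.card ≤ r} → ZMod 2

/-- Evaluation of the polynomial with coefficient vector `c` at the point `p`. -/
def evalC {d r : ℕ} (c : CoefSp d r) (p : Fin d → ZMod 2) : ZMod 2 :=
  ∑ S : {S : Finset (Fin d) // S.card ≤ r}, c S * ∏ i ∈ S.1, p i

/-! Evaluation at the points of a set `T` with `|T| < 2 ^ (L + 1)` maps the polynomials of degree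
at most `L` onto `F_2^T`: a nonzero vector orthogonal to all the evaluations is a codeword of the
dual Reed–Muller code, whose minimum weight is `2 ^ (L + 1)` (Plotkin's `(u | u + v)` recursion).
So the restrictions of the `g^{(i,j)}` to `T` are uniform and independent: each block `M^{(i)}`
restricted to `T` is a uniformly random map `T → F_2^w`. If the OR of the rows has weight at most
`(1 - 1/√L) k |T|`, then some `A = ⌈k|T|/√L⌉` positions each repeat the value of another position
of their block, and a union bound over these positions and their twins bounds the probability by
`C(k|T|, A) (|T| / 2^w)^A ≤ (3√L / L²)^A ≤ 2^{-A}`, using `|T| ≤ 2^w / L²`. -/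

lemma sum_pi_fin_succ_zmod_two {M : Type*} [AddCommMonoid M] {d : ℕ}
    (f : (Fin (d + 1) → ZMod 2) → M) :
    ∑ p, f p = ∑ q, f (Fin.cons 0 q) + ∑ q, f (Fin.cons 1 q) := by
  rw [← (Fin.consEquiv fun _ => ZMod 2).sum_comp, Fintype.sum_prod_type]
  exact Fin.sum_univ_two (fun b : Fin 2 => ∑ q, f (Fin.cons b q))

lemma hammingNorm_add_le {ι M : Type*} [Fintype ι] [AddMonoid M] [DecidableEq M] (x y : ι → M) :
    hammingNorm (x + y) ≤ hammingNorm x + hammingNorm y := by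
  classical
  refine (card_le_card fun i => ?_).trans (card_union_le _ _)
  simp only [mem_filter, mem_univ, true_and, mem_union, Pi.add_apply]
  contrapose!
  rintro ⟨hx, hy⟩
  simp [hx, hy]

lemma hammingNorm_pi_fin_succ_zmod_two {d : ℕ} (v : (Fin (d + 1) → ZMod 2) → ZMod 2) :
    hammingNorm v =
      hammingNorm (fun q => v (Fin.cons 0 q)) + hammingNorm (fun q => v (Fin.cons 1 q)) := by
  simp only [hammingNorm, card_filter]
  exact sum_pi_fin_succ_zmod_two _

theorem two_pow_succ_le_hammingNorm_of_orthogonal {d L : ℕ} {v : (Fin d → ZMod 2) → ZMod 2}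
    (hv : v ≠ 0)
    (horth : ∀ S : Finset (Fin d), #S ≤ L → ∑ p, v p * ∏ i ∈ S, p i = 0) :
    2 ^ (L + 1) ≤ hammingNorm v := by
  induction d generalizing L with
  | zero =>
    refine absurd (funext fun p => ?_) hv
    have h := horth ∅ (by simp)
    rwa [Fintype.sum_subsingleton _ p, prod_empty, mul_one] at h
  | succ d ih =>
    rw [hammingNorm_pi_fin_succ_zmod_two]
    set v₀ : (Fin d → ZMod 2) → ZMod 2 := fun q => v (Fin.cons 0 q)
    set v₁ : (Fin d → ZMod 2) → ZMod 2 := fun q => v (Fin.cons 1 q)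
    have hsucc : ∀ S : Finset (Fin d), #S ≤ L → ∑ q, (v₀ + v₁) q * ∏ i ∈ S, q i = 0 := by
      intro S hS
      simpa [sum_pi_fin_succ_zmod_two, prod_map, add_mul, sum_add_distrib, v₀, v₁]
        using horth (S.map (Fin.succEmb d)) (by simpa using hS)
    have hzero : ∀ S : Finset (Fin d), #S + 1 ≤ L → ∑ q, v₁ q * ∏ i ∈ S, q i = 0 := by
      intro S hS
      have h0 : (0 : Fin (d + 1)) ∉ S.map (Fin.succEmb d) := by simp [Fin.succ_ne_zero]
      simpa [sum_pi_fin_succ_zmod_two, prod_map, prod_insert h0, v₁]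
        using horth (insert 0 (S.map (Fin.succEmb d)))
          (by simpa [card_insert_of_notMem h0] using hS)
    by_cases hsum : v₀ + v₁ = 0
    · have heq : v₀ = v₁ := by simpa [CharTwo.add_eq_zero] using hsum
      have hv₁ : v₁ ≠ 0 := by
        rintro h
        refine hv (funext fun p => ?_)
        rw [← Fin.cons_self_tail p]
        generalize p 0 = b, Fin.tail p = q
        fin_cases b
        · exact congrFun (heq.trans h) q
        · exact congrFun h q
      rw [heq]
      cases L with
      | zero => have := hammingNorm_pos_iff.2 hv₁; omega
      | succ L =>
        have := ih (L := L) hv₁ fun S hS => hzero S (by omega)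
        rw [pow_succ]
        omega
    · exact (ih hsum hsucc).trans (hammingNorm_add_le _ _)

section Evaluation

variable {d r : ℕ}

noncomputable def evalOn (T : Finset (Fin d → ZMod 2)) :
    CoefSp d r →ₗ[ZMod 2] (T → ZMod 2) where
  toFun c p := evalC c p
  map_add' c c' := by
    funext p
    simp [evalC, add_mul, sum_add_distrib]
  map_smul' a c := by
    funext p
    simp [evalC, mul_sum, mul_assoc]

lemma evalC_single (S : {S : Finset (Fin d) // #S ≤ r}) (p : Fin d → ZMod 2) :
    evalC (Pi.single S 1 : CoefSp d r) p = ∏ i ∈ S.1, p i := by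
  rw [evalC, Fintype.sum_eq_single S (fun S' h => by simp [h])]
  simp

theorem evalOn_surjective {T : Finset (Fin d → ZMod 2)} (hT : #T < 2 ^ (r + 1)) :
    Function.Surjective (evalOn (r := r) T) := by
  rw [← LinearMap.range_eq_top, ← Submodule.dualAnnihilator_eq_bot_iff, Submodule.eq_bot_iff]
  intro f hf
  rw [Submodule.mem_dualAnnihilator] at hf
  set v : (Fin d → ZMod 2) → ZMod 2 := fun p =>
    if h : p ∈ T then f (Pi.single ⟨p, h⟩ 1) else 0
  have hfv : ∀ x, f x = ∑ p : T, x p * v p := by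
    intro x
    rw [LinearMap.pi_apply_eq_sum_univ f x]
    refine sum_congr rfl fun p _ => ?_
    have : (fun j => if p = j then (1 : ZMod 2) else 0) = Pi.single p 1 := by
      ext j
      simp [Pi.single_apply, eq_comm]
    simp [v, this]
  have hvT : ∀ p ∉ T, v p = 0 := fun p hp => dif_neg hp
  have horth : ∀ S : Finset (Fin d), #S ≤ r → ∑ p, v p * ∏ i ∈ S, p i = 0 := by
    intro S hS
    have := hf _ (LinearMap.mem_range_self (evalOn T) (Pi.single ⟨S, hS⟩ 1))
    rw [hfv] at this
    rw [← this, ← sum_subset (subset_univ T) fun p _ hp => by simp [hvT p hp], ← sum_coe_sort T]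
    refine sum_congr rfl fun p _ => ?_
    rw [mul_comm]
    simp [evalOn, evalC_single]
  have hv : v = 0 := by
    by_contra hv
    have := two_pow_succ_le_hammingNorm_of_orthogonal hv horth
    have : hammingNorm v ≤ #T := card_le_card fun p hp => by
      by_contra h
      simp [hvT p h] at hp
    omega
  ext x
  simp [hfv, hv]

end Evaluation

section Twins

variable {ι α β : Type*}

/-- With `g i p` the column of `M^{(i)}` hit by the row `p`, this is the Hamming weight of the OR
of the rows of `[M^{(1)} ‖ … ‖ M^{(k)}]` indexed by `α`. -/
def orWeight [Fintype ι] [Fintype α] [DecidableEq β] (g : ι → α → β) : ℕ :=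
  ∑ i, #(univ.image (g i))

lemma natCard_exists_apply_eq_orWeight [Fintype ι] [Fintype α] [Fintype β] [DecidableEq β]
    (g : ι → α → β) : Nat.card {iq : ι × β // ∃ a, g iq.1 a = iq.2} = orWeight g := by
  rw [Nat.card_eq_fintype_card, Fintype.card_subtype, card_filter, Fintype.sum_prod_type]
  refine sum_congr rfl fun i _ => ?_
  rw [← card_filter]
  congr 1
  ext b
  simp

def HasTwinsOutside (F : Finset (ι × α)) (g : ι → α → β) : Prop :=
  ∀ x ∈ F, ∃ a, (x.1, a) ∉ F ∧ g x.1 a = g x.1 x.2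

instance [Fintype α] [DecidableEq ι] [DecidableEq α] [DecidableEq β] (F : Finset (ι × α)) :
    DecidablePred (HasTwinsOutside (β := β) F) :=
  fun _ => Finset.decidableDforallFinset

/-- Such a `g` is determined by its values off `F` together with a choice of twin for each
point of `F`. -/
theorem card_hasTwinsOutside_le [Fintype ι] [Fintype α] [Fintype β] [DecidableEq ι]
    [DecidableEq α] [DecidableEq β] (F : Finset (ι × α)) :
    #{g : ι → α → β | HasTwinsOutside F g} ≤
      Fintype.card α ^ #F * Fintype.card β ^ (Fintype.card ι * Fintype.card α - #F) := by
  let twin : (ι → α → β) → F → α := fun g x =>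
    if h : ∃ a, (x.1.1, a) ∉ F ∧ g x.1.1 a = g x.1.1 x.1.2 then h.choose else x.1.2
  let code : (ι → α → β) → (F → α) × ((Fᶜ : Finset (ι × α)) → β) := fun g =>
    (twin g, fun x => g x.1.1 x.1.2)
  have hcode : Set.InjOn code {g | HasTwinsOutside F g} := by
    intro g hg g' hg' hgg'
    simp only [Prod.mk.injEq, code] at hgg'
    obtain ⟨htwin, hout⟩ := hgg'
    have hFc : ∀ x ∉ F, g x.1 x.2 = g' x.1 x.2 := fun x hx => congrFun hout ⟨x, mem_compl.2 hx⟩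
    funext i a
    by_cases hx : (i, a) ∈ F
    · obtain ⟨h₁, e₁⟩ := (hg _ hx).choose_spec
      obtain ⟨h₂, e₂⟩ := (hg' _ hx).choose_spec
      have := congrFun htwin ⟨_, hx⟩
      simp only [twin, dif_pos (hg _ hx), dif_pos (hg' _ hx)] at this
      rw [← e₁, ← e₂, ← this]
      exact hFc _ h₁
    · exact hFc _ hx
  calc #{g : ι → α → β | HasTwinsOutside F g}
      ≤ Fintype.card ((F → α) × ((Fᶜ : Finset (ι × α)) → β)) :=
        card_le_card_of_injOn code (fun _ _ => mem_univ _) (by simpa using hcode)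
    _ = _ := by
        rw [Fintype.card_prod, Fintype.card_fun, Fintype.card_fun, Fintype.card_coe,
          Fintype.card_coe, card_compl, Fintype.card_prod]

theorem exists_hasTwinsOutside [Fintype ι] [Fintype α] [DecidableEq α] [DecidableEq β]
    {g : ι → α → β} {A : ℕ}
    (h : orWeight g + A ≤ Fintype.card ι * Fintype.card α) :
    ∃ F : Finset (ι × α), #F = A ∧ HasTwinsOutside F g := by
  choose R _ hinj hR using fun i =>
    exists_subset_injOn_image_eq_of_surjOn (f := g i) Set.univ (univ.image (g i))
      (fun b hb => by simpa using hb)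
  have hcard : ∀ i, #(R i) = #(univ.image (g i)) := fun i => by
    rw [← hR i, card_image_of_injOn (hinj i)]
  have hN : A ≤ #{x : ι × α | x.2 ∉ R x.1} := by
    have := card_filter_add_card_filter_not (s := univ) (fun x : ι × α => x.2 ∈ R x.1)
    have hmem : #{x : ι × α | x.2 ∈ R x.1} = ∑ i, #(R i) := by
      rw [card_filter, Fintype.sum_prod_type]
      simp
    rw [hmem, card_univ, Fintype.card_prod] at this
    simp only [hcard] at this
    rw [orWeight] at h
    omega
  obtain ⟨F, hFN, hFA⟩ := exists_subset_card_eq hN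
  refine ⟨F, hFA, fun x hx => ?_⟩
  obtain ⟨a, haR, ha⟩ := mem_image.1 ((hR x.1).symm ▸ mem_image_of_mem (g x.1) (mem_univ x.2))
  exact ⟨a, fun haF => (mem_filter.1 (hFN haF)).2 haR, ha⟩

theorem card_orWeight_add_le_le [Fintype ι] [Fintype α] [Fintype β] [DecidableEq ι]
    [DecidableEq α] [DecidableEq β] (A : ℕ) :
    #{g : ι → α → β | orWeight g + A ≤ Fintype.card ι * Fintype.card α} ≤
      (Fintype.card ι * Fintype.card α).choose A *
        (Fintype.card α ^ A * Fintype.card β ^ (Fintype.card ι * Fintype.card α - A)) := by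
  calc _ ≤ #((powersetCard A (univ : Finset (ι × α))).biUnion
          fun F => {g : ι → α → β | HasTwinsOutside F g}) := by
        refine card_le_card fun g hg => ?_
        obtain ⟨F, hFA, hF⟩ := exists_hasTwinsOutside (mem_filter.1 hg).2
        exact mem_biUnion.2 ⟨F, mem_powersetCard_univ.2 hFA, by simpa using hF⟩
    _ ≤ ∑ F ∈ powersetCard A (univ : Finset (ι × α)), #{g : ι → α → β | HasTwinsOutside F g} :=
        card_biUnion_le
    _ ≤ ∑ F ∈ powersetCard A (univ : Finset (ι × α)),
          Fintype.card α ^ A * Fintype.card β ^ (Fintype.card ι * Fintype.card α - A) :=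
        sum_le_sum fun F hF => mem_powersetCard_univ.1 hF ▸ card_hasTwinsOutside_le F
    _ = _ := by simp [card_powersetCard]

end Twins

lemma choose_le_three_mul_pow {K A : ℕ} {r : ℝ} (hr : 0 ≤ r) (hK : (K : ℝ) ≤ A * r) :
    (K.choose A : ℝ) ≤ (3 * r) ^ A := by
  have hA : (A : ℝ) ^ A / A.factorial ≤ 3 ^ A := by
    calc (A : ℝ) ^ A / A.factorial ≤ Real.exp A :=
          Real.pow_div_factorial_le_exp _ (Nat.cast_nonneg A) A
      _ = Real.exp 1 ^ A := by rw [← Real.exp_nat_mul, mul_one]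
      _ ≤ 3 ^ A := pow_le_pow_left₀ (Real.exp_pos 1).le
          (Real.exp_one_lt_d9.le.trans (by norm_num)) A
  calc (K.choose A : ℝ) ≤ (K : ℝ) ^ A / A.factorial := Nat.choose_le_pow_div A K
    _ ≤ (A * r) ^ A / A.factorial := by gcongr
    _ = (A : ℝ) ^ A / A.factorial * r ^ A := by ring
    _ ≤ 3 ^ A * r ^ A := by gcongr
    _ = (3 * r) ^ A := (mul_pow _ _ _).symm

theorem choose_mul_pow_le_two_rpow {L K : ℕ} {s B : ℝ} (hL : 4 ≤ L) (hs : 0 ≤ s)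
    (hsB : s * L ^ 2 ≤ B) :
    (K.choose ⌈K / √L⌉₊ : ℝ) * (s ^ ⌈K / √L⌉₊ * B ^ (K - ⌈K / √L⌉₊)) ≤
      2 ^ (-(K : ℝ) / √L) * B ^ K := by
  set A := ⌈K / √L⌉₊
  have hsqrt : 2 ≤ √L := by
    rw [show (2 : ℝ) = √4 by rw [show (4 : ℝ) = 2 ^ 2 by norm_num, Real.sqrt_sq (by norm_num)]]
    exact Real.sqrt_le_sqrt (by exact_mod_cast hL)
  have hL_sq : (L : ℝ) ^ 2 = √L ^ 4 := by
    rw [show 4 = 2 * 2 from rfl, pow_mul, Real.sq_sqrt (Nat.cast_nonneg L)]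
  have hB : 0 ≤ B := le_trans (by positivity) hsB
  have hKA : (K : ℝ) ≤ A * √L := (div_le_iff₀ (by positivity)).1 (Nat.le_ceil _)
  rcases lt_or_ge K A with hAK | hAK
  · rw [Nat.choose_eq_zero_of_lt hAK, Nat.cast_zero, zero_mul]
    positivity
  have hstep : 3 * √L * s ≤ B / 2 := by
    have : 3 * √L * 2 ≤ (L : ℝ) ^ 2 := by
      rw [hL_sq]
      nlinarith [pow_le_pow_left₀ (by norm_num) hsqrt 3]
    nlinarith
  calc (K.choose A : ℝ) * (s ^ A * B ^ (K - A))
      ≤ (3 * √L) ^ A * s ^ A * B ^ (K - A) := by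
        rw [← mul_assoc]
        gcongr
        exact choose_le_three_mul_pow (by positivity) hKA
    _ = (3 * √L * s) ^ A * B ^ (K - A) := by ring
    _ ≤ (B / 2) ^ A * B ^ (K - A) := by gcongr
    _ = 2 ^ (-(A : ℝ)) * B ^ K := by
        rw [div_pow, Real.rpow_neg (by norm_num), Real.rpow_natCast, div_mul_eq_mul_div,
          ← pow_add, Nat.add_sub_cancel' hAK, inv_mul_eq_div]
    _ ≤ 2 ^ (-(K : ℝ) / √L) * B ^ K := by
        gcongr
        · norm_num
        · rw [neg_div, neg_le_neg_iff]
          exact Nat.le_ceil _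

theorem card_filter_comp_div_card_of_surjective {G H : Type*} [AddGroup G] [Fintype G]
    [AddGroup H] [Fintype H] [DecidableEq H] {φ : G →+ H} (hφ : Function.Surjective φ)
    (P : H → Prop) [DecidablePred P] :
    (#{g | P (φ g)} : ℝ) / Fintype.card G = #{h | P h} / Fintype.card H := by
  set K := #{g | φ g = 0}
  have hfiber : ∀ h, #{g | φ g = h} = K := fun h =>
    AddMonoidHom.card_fiber_eq_of_mem_range φ (hφ h) (hφ 0)
  have hK : 0 < K := card_pos.2 ⟨0, by simp⟩
  have hP : #{g | P (φ g)} = #{h | P h} * K := by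
    rw [card_eq_sum_card_fiberwise (f := φ) (t := {h | P h}) fun g hg => by simpa using hg,
      ← smul_eq_mul, ← sum_const]
    refine sum_congr rfl fun h hh => ?_
    rw [← hfiber h, filter_filter]
    congr 1
    ext g
    simp only [mem_filter, mem_univ, true_and] at hh ⊢
    exact ⟨And.right, fun hg => ⟨hg ▸ hh, hg⟩⟩
  have hG : Fintype.card G = Fintype.card H * K := by
    rw [← card_univ, card_eq_sum_card_fiberwise (f := φ) (t := univ) (by simp)]
    simp [hfiber]
  rw [hP, hG]
  push_cast
  rw [mul_div_mul_right _ _ (by positivity)]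

noncomputable def evalRows (d L k w : ℕ) (T : Finset (Fin d → ZMod 2)) :
    (Fin k → Fin w → CoefSp d L) →+ (Fin k → T → Fin w → ZMod 2) where
  toFun c i p t := evalOn T (c i t) p
  map_zero' := by ext; simp
  map_add' c c' := by ext; simp

lemma evalRows_surjective {d L k w : ℕ} {T : Finset (Fin d → ZMod 2)} (hT : #T < 2 ^ (L + 1)) :
    Function.Surjective (evalRows d L k w T) := fun y => by
  have hsurj := evalOn_surjective (r := L) hT
  refine ⟨fun i t => Function.surjInv hsurj fun p => y i p t, ?_⟩
  ext i p t
  exact congrFun (Function.surjInv_eq hsurj _) p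

lemma natCard_orRows_eq_orWeight {d L k w : ℕ} (T : Finset (Fin d → ZMod 2))
    (c : Fin k → Fin w → CoefSp d L) :
    Nat.card {iq : Fin k × (Fin w → ZMod 2) // ∃ p ∈ T, ∀ t, evalC (c iq.1 t) p = iq.2 t} =
      orWeight (evalRows d L k w T c) := by
  rw [← natCard_exists_apply_eq_orWeight]
  refine Nat.card_congr (Equiv.subtypeEquivRight fun iq => ?_)
  simp [evalRows, evalOn, funext_iff]

theorem one_sub_two_rpow_le_prob_orWeight {d L k w : ℕ} (hL : 4 ≤ L)
    {T : Finset (Fin d → ZMod 2)} (hT : #T < 2 ^ (L + 1)) (hTw : (#T : ℝ) * L ^ 2 ≤ 2 ^ w) :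
    1 - (2 : ℝ) ^ (-((k * #T : ℕ) : ℝ) / √L) ≤
      (Nat.card {c : Fin k → Fin w → CoefSp d L //
          ((1 - 1 / √L) * k * #T : ℝ) <
            (Nat.card {iq : Fin k × (Fin w → ZMod 2) //
                ∃ p ∈ T, ∀ t, evalC (c iq.1 t) p = iq.2 t} : ℝ)} : ℝ) /
        (Nat.card (Fin k → Fin w → CoefSp d L) : ℝ) := by
  set K := k * #T
  set A := ⌈(K : ℝ) / √L⌉₊
  have hK : (K : ℝ) = k * #T := Nat.cast_mul _ _
  let P : (Fin k → T → Fin w → ZMod 2) → Prop := fun y =>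
    (1 - 1 / √L) * k * #T < (orWeight y : ℝ)
  have hbad : ∀ y, ¬ P y → orWeight y + A ≤ Fintype.card (Fin k) * Fintype.card T := by
    intro y hy
    have hA : (A : ℝ) < K / √L + 1 := Nat.ceil_lt_add_one (by positivity)
    have hy' : (orWeight y : ℝ) ≤ K - K / √L := by
      rw [hK]
      linarith [not_lt.1 hy, show (1 - 1 / √L) * k * #T = (k * #T - k * #T / √L : ℝ) by ring]
    have : orWeight y + A < K + 1 := by
      exact_mod_cast (by linarith : (orWeight y + A : ℝ) < K + 1)
    rw [Fintype.card_fin, Fintype.card_coe]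
    omega
  have hcount : (#{y | ¬ P y} : ℝ) ≤
      2 ^ (-(K : ℝ) / √L) * Fintype.card (Fin k → T → Fin w → ZMod 2) := by
    have hH : Fintype.card (Fin k → T → Fin w → ZMod 2) = (2 ^ w) ^ K := by
      simp only [K, Fintype.card_fun, Fintype.card_fin, Fintype.card_coe, ZMod.card, ← pow_mul]
      ring
    calc (#{y | ¬ P y} : ℝ)
        ≤ #{y : Fin k → T → Fin w → ZMod 2 |
            orWeight y + A ≤ Fintype.card (Fin k) * Fintype.card T} := by
          exact_mod_cast card_le_card (monotone_filter_right _ fun y _ => hbad y)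
      _ ≤ (K.choose A : ℝ) * ((#T : ℝ) ^ A * (2 ^ w) ^ (K - A)) := by
          exact_mod_cast (card_orWeight_add_le_le A).trans_eq (by simp [K])
      _ ≤ 2 ^ (-(K : ℝ) / √L) * (2 ^ w) ^ K :=
          choose_mul_pow_le_two_rpow hL (Nat.cast_nonneg _) hTw
      _ = _ := by rw [hH]; push_cast; rfl
  simp only [natCard_orRows_eq_orWeight]
  rw [Nat.card_eq_fintype_card, Nat.card_eq_fintype_card, Fintype.card_subtype,
    card_filter_comp_div_card_of_surjective (evalRows_surjective hT) P]
  have hH : (0 : ℝ) < Fintype.card (Fin k → T → Fin w → ZMod 2) := mod_cast Fintype.card_pos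
  have hsplit :
      (#{y | P y} : ℝ) = Fintype.card (Fin k → T → Fin w → ZMod 2) - #{y | ¬ P y} := by
    rw [eq_sub_iff_add_eq, ← card_univ]
    exact_mod_cast card_filter_add_card_filter_not P
  rw [hsplit, sub_div, div_self hH.ne', sub_le_sub_iff_left, div_le_iff₀ hH]
  exact hcount

/-- There is an absolute constant `N` such that for all `n ≥ N` and
constants `c_m ≥ 2`, `c_k ≥ c_m + 1` (with `n` large enough that `k < n` and
`k·2^w ≤ n`, where `L = ⌈log₂ n⌉`, `k = L^{c_k}`, `w = ⌊log₂(n/k)⌋`,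
`m = 2^{L^{c_m}}`): for every fixed set `T ⊆ F_2^{log₂ m}` of row indices with
`1 ≤ |T| ≤ 2^w / L²`, if the `k·w` polynomials `g^{(i,j)}` are drawn independently
and uniformly at random from the polynomials of total degree at most `L`, then with
probability at least `1 − 2^{−k|T|/√L}`, the coordinatewise OR of the rows of
`M = [M^{(1)} ‖ … ‖ M^{(k)}]` indexed by `T` (whose columns are indexed by pairs
`(i, q) ∈ Fin k × F_2^w`, the column `(i,q)` being hit iff some `p ∈ T` has
`g^{(i,t)}(p) = q_t` for all `t`) has Hamming weight strictly greater than
`(1 − 1/√L)·k·|T|`. -/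
theorem stmt4 : ∃ N : ℕ, ∀ n : ℕ, N ≤ n → ∀ cm ck : ℕ, 2 ≤ cm → cm + 1 ≤ ck →
    (Nat.clog 2 n) ^ ck < n →
    (Nat.clog 2 n) ^ ck * 2 ^ (Nat.log 2 (n / (Nat.clog 2 n) ^ ck)) ≤ n →
    ∀ T : Finset (Fin ((Nat.clog 2 n) ^ cm) → ZMod 2), 0 < T.card →
    (T.card : ℝ) ≤ (2 : ℝ) ^ (Nat.log 2 (n / (Nat.clog 2 n) ^ ck)) / (Nat.clog 2 n : ℝ) ^ 2 →
    1 - (2 : ℝ) ^ (-(((Nat.clog 2 n) ^ ck * T.card : ℕ) : ℝ) / Real.sqrt (Nat.clog 2 n)) ≤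
      (Nat.card {c : Fin ((Nat.clog 2 n) ^ ck) →
            Fin (Nat.log 2 (n / (Nat.clog 2 n) ^ ck)) →
            CoefSp ((Nat.clog 2 n) ^ cm) (Nat.clog 2 n) //
          ((1 - 1 / Real.sqrt (Nat.clog 2 n)) * (Nat.clog 2 n) ^ ck * T.card : ℝ) <
            (Nat.card {iq : Fin ((Nat.clog 2 n) ^ ck) ×
                  (Fin (Nat.log 2 (n / (Nat.clog 2 n) ^ ck)) → ZMod 2) //
                ∃ p ∈ T, ∀ t, evalC (c iq.1 t) p = iq.2 t} : ℝ)} : ℝ) /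
        (Nat.card (Fin ((Nat.clog 2 n) ^ ck) →
            Fin (Nat.log 2 (n / (Nat.clog 2 n) ^ ck)) →
            CoefSp ((Nat.clog 2 n) ^ cm) (Nat.clog 2 n)) : ℝ) := by
  refine ⟨9, fun n hn cm ck _ _ _ hkw T _ hTw => ?_⟩
  have hL : 4 ≤ Nat.clog 2 n := by
    by_contra h
    have : n ≤ 2 ^ 3 := (Nat.clog_le_iff_le_pow (by norm_num)).1 (by omega)
    omega
  have hTw' := (le_div_iff₀ (by positivity)).1 hTw
  have hT : #T < 2 ^ (Nat.clog 2 n + 1) := by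
    have hTle : #T ≤ 2 ^ Nat.log 2 (n / Nat.clog 2 n ^ ck) := by
      have h1 : (1 : ℝ) ≤ (Nat.clog 2 n : ℝ) ^ 2 := mod_cast Nat.one_le_pow _ _ (by omega)
      exact_mod_cast (by nlinarith [(#T).cast_nonneg (α := ℝ)] : (#T : ℝ) ≤ 2 ^ _)
    have h2w := (Nat.le_mul_of_pos_left _ (by positivity)).trans hkw
    have := Nat.le_pow_clog (by norm_num : 1 < 2) n
    have := Nat.pow_lt_pow_succ (by norm_num : 1 < 2) (n := Nat.clog 2 n)
    omega
  simpa only [Nat.cast_pow] using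
    one_sub_two_rpow_le_prob_orWeight (k := Nat.clog 2 n ^ ck) hL hT hTw'
end

section
/- In the planted hypergraph model, let φ(0) = −√(p/(1−p)) and φ(1) = √((1−p)/p) with p = 1/|Γ|, and write Y_e^φ = φ(Y_e). Then for every nonempty set S of potential hyperedges, E_{Y∼P}[ ∏_{e∈S} Y_e^φ ] ≤ |Γ|^{|S|/2} · Pr_{Y∼P}[ every e ∈ S is planted ]. -/
/-!
Conditionally on the secret `s`, the inclusion coins are independent with bias `p`, and
`p φ(1) + (1 - p) φ(0) = 0`. So a hyperedge of `S` that is not planted under `s` contributes a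
factor of mean zero, while a planted one is present for sure and contributes `φ(1)`. The
expectation is therefore exactly `φ(1)^|S| · Pr[every e ∈ S is planted]`, and
`φ(1) = √(|Γ| - 1) ≤ √|Γ|`.
-/

open Finset

open scoped Classical

/-- Probability of the event `P` under the distribution on the finite sample space
`Ω` whose probability mass function is `w`. -/
noncomputable def prSum {Ω : Type*} [Fintype Ω] (w : Ω → ℝ) (P : Ω → Prop) : ℝ :=
  ∑ ω : Ω, if P ω then w ω else 0

/-- `N_H(i, ·)`: the column indices of the nonzero entries of the row `r` (which
has exactly `k` of them), in increasing order. -/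
noncomputable def nbr {n k : ℕ} (r : Fin n → ZMod 2)
    (hr : (Finset.univ.filter (fun c => r c ≠ 0)).card = k) (j : Fin k) : Fin n :=
  ((Finset.univ.filter (fun c => r c ≠ 0)).orderIsoOfFin hr j : Fin n)

section Bernoulli

variable {E : Type*} [Fintype E] [DecidableEq E] (q : ℝ)

theorem sum_prod_bernoulli_mul_prod (f : E → Bool → ℝ) :
    ∑ c : E → Bool, (∏ e, if c e then q else 1 - q) * ∏ e, f e (c e) =
      ∏ e, (q * f e true + (1 - q) * f e false) := by
  calc ∑ c : E → Bool, (∏ e, if c e then q else 1 - q) * ∏ e, f e (c e)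
      = ∑ c : E → Bool, ∏ e, (if c e then q else 1 - q) * f e (c e) := by
        simp only [prod_mul_distrib]
    _ = ∏ e, ∑ b : Bool, (if b then q else 1 - q) * f e b :=
        (Fintype.prod_sum fun e (b : Bool) => (if b then q else 1 - q) * f e b).symm
    _ = ∏ e, (q * f e true + (1 - q) * f e false) := by simp

theorem sum_prod_bernoulli : ∑ c : E → Bool, ∏ e, (if c e then q else 1 - q) = 1 := by
  simpa using sum_prod_bernoulli_mul_prod q (fun _ _ => (1 : ℝ))

theorem sum_prod_bernoulli_mul_prod_or {A B : ℝ} (hAB : q * A = (1 - q) * B) (S : Finset E)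
    (P : E → Prop) [DecidablePred P] :
    ∑ c : E → Bool, (∏ e, if c e then q else 1 - q) *
        ∏ e ∈ S, (if c e = true ∨ P e then A else -B) =
      if ∀ e ∈ S, P e then A ^ S.card else 0 := by
  have hfactor : ∀ e, q * (if e ∈ S then (if true = true ∨ P e then A else -B) else 1) +
      (1 - q) * (if e ∈ S then (if false = true ∨ P e then A else -B) else 1) =
      if e ∈ S then (if P e then A else 0) else 1 := by
    intro e
    split_ifs <;> simp_all
    linarith
  simp_rw [← Fintype.prod_ite_mem S (fun e => if _ = true ∨ P e then A else -B)]
  rw [sum_prod_bernoulli_mul_prod q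
      fun e b => if e ∈ S then (if b = true ∨ P e then A else -B) else 1,
    prod_congr rfl fun e _ => hfactor e, Fintype.prod_ite_mem, prod_ite_zero, prod_const]
  congr

end Bernoulli

theorem prSum_nonneg {Ω : Type*} [Fintype Ω] {w : Ω → ℝ} (hw : ∀ ω, 0 ≤ w ω)
    (P : Ω → Prop) :
    0 ≤ prSum w P :=
  sum_nonneg fun ω _ => by split_ifs; exacts [hw ω, le_rfl]

section PlantedModel

variable {E Ω : Type*} [Fintype E] [DecidableEq E] [Fintype Ω] (q N : ℝ) (S : Finset E)
  (planted : E → Ω → Prop) [∀ e s, Decidable (planted e s)]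

theorem prSum_bernoulli_mul_of_snd (Q : Ω → Prop) :
    prSum (fun ω : (E → Bool) × Ω => (∏ e, if ω.1 e then q else 1 - q) * N)
        (fun ω => Q ω.2) =
      ∑ s, if Q s then N else 0 := by
  rw [prSum, Fintype.sum_prod_type, sum_comm]
  refine sum_congr rfl fun s _ => ?_
  split_ifs
  · rw [← sum_mul, sum_prod_bernoulli, one_mul]
  · exact sum_const_zero

theorem sum_bernoulli_mul_prod_or_eq_pow_mul_prSum {A B : ℝ} (hAB : q * A = (1 - q) * B) :
    ∑ ω : (E → Bool) × Ω, ((∏ e, if ω.1 e then q else 1 - q) * N) *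
        ∏ e ∈ S, (if ω.1 e = true ∨ planted e ω.2 then A else -B) =
      A ^ S.card * prSum (fun ω : (E → Bool) × Ω => (∏ e, if ω.1 e then q else 1 - q) * N)
        (fun ω => ∀ e ∈ S, planted e ω.2) := by
  rw [prSum_bernoulli_mul_of_snd q N fun s => ∀ e ∈ S, planted e s, mul_sum,
    Fintype.sum_prod_type, sum_comm]
  refine sum_congr rfl fun s _ => ?_
  simp_rw [mul_right_comm _ N, ← sum_mul, sum_prod_bernoulli_mul_prod_or q hAB]
  split_ifs <;> ring

end PlantedModel

theorem mul_sqrt_div_self {a : ℝ} (ha : 0 ≤ a) (b : ℝ) : a * √(b / a) = √(a * b) := by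
  calc a * √(b / a) = √(a ^ 2) * √(b / a) := by rw [Real.sqrt_sq ha]
    _ = √(a ^ 2 * (b / a)) := (Real.sqrt_mul (sq_nonneg a) _).symm
    _ = √(a * b) := by
      rcases eq_or_ne a 0 with rfl | ha'
      · simp
      · congr 1
        field_simp

theorem mul_sqrt_one_sub_div_eq {q : ℝ} (h0 : 0 ≤ q) (h1 : q ≤ 1) :
    q * √((1 - q) / q) = (1 - q) * √(q / (1 - q)) := by
  rw [mul_sqrt_div_self h0, mul_sqrt_div_self (sub_nonneg.2 h1), mul_comm]

theorem sqrt_one_sub_inv_div_inv_pow_le {c : ℝ} (hc : 0 < c) (n : ℕ) :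
    √((1 - c⁻¹) / c⁻¹) ^ n ≤ c ^ ((n : ℝ) / 2) := by
  rw [Real.rpow_div_two_eq_sqrt _ hc.le, Real.rpow_natCast]
  gcongr
  rw [div_inv_eq_mul, sub_mul, inv_mul_cancel₀ hc.ne', one_mul]
  linarith

theorem stmt13_general (m n k : ℕ) (H : Fin m → Fin n → ZMod 2)
    (hH : ∀ i, (Finset.univ.filter (fun j => H i j ≠ 0)).card = k)
    (Sa Γa : Type*) [Fintype Sa] [Fintype Γa]
    (hΓ : 2 ≤ Fintype.card Γa)
    (S : Finset ({J : Fin k → Fin n // ∃ i, J = nbr (H i) (hH i)} × (Fin k → Sa))) :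
    (∑ ω : (({J : Fin k → Fin n // ∃ i, J = nbr (H i) (hH i)} × (Fin k → Sa)) → Bool) ×
        (Fin n → Sa),
      ((∏ e, if ω.1 e then ((Fintype.card Γa : ℝ))⁻¹ else 1 - (Fintype.card Γa : ℝ)⁻¹) *
          (1 / (Nat.card (Fin n → Sa) : ℝ))) *
        ∏ e ∈ S,
          (if ω.1 e = true ∨ ∀ ℓ, e.2 ℓ = ω.2 (e.1.1 ℓ) then
            Real.sqrt ((1 - (Fintype.card Γa : ℝ)⁻¹) / (Fintype.card Γa : ℝ)⁻¹)
          else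
            -Real.sqrt ((Fintype.card Γa : ℝ)⁻¹ / (1 - (Fintype.card Γa : ℝ)⁻¹)))) ≤
    (Fintype.card Γa : ℝ) ^ ((S.card : ℝ) / 2) *
      prSum
        (fun ω : (({J : Fin k → Fin n // ∃ i, J = nbr (H i) (hH i)} × (Fin k → Sa)) → Bool) ×
            (Fin n → Sa) =>
          (∏ e, if ω.1 e then ((Fintype.card Γa : ℝ))⁻¹ else 1 - (Fintype.card Γa : ℝ)⁻¹) *
            (1 / (Nat.card (Fin n → Sa) : ℝ)))
        (fun ω => ∀ e ∈ S, ∀ ℓ, e.2 ℓ = ω.2 (e.1.1 ℓ)) := by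
  have hc : (1 : ℝ) ≤ Fintype.card Γa := by exact_mod_cast one_le_two.trans hΓ
  have hq0 : 0 ≤ (Fintype.card Γa : ℝ)⁻¹ := by positivity
  have hq1 : (Fintype.card Γa : ℝ)⁻¹ ≤ 1 := inv_le_one_of_one_le₀ hc
  rw [sum_bernoulli_mul_prod_or_eq_pow_mul_prSum _ _ S
    (fun e (s : Fin n → Sa) => ∀ ℓ, e.2 ℓ = s (e.1.1 ℓ)) (mul_sqrt_one_sub_div_eq hq0 hq1)]
  refine mul_le_mul_of_nonneg_right (sqrt_one_sub_inv_div_inv_pow_le (by positivity) _)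
    (prSum_nonneg (fun ω => ?_) _)
  exact mul_nonneg (prod_nonneg fun e _ => by split_ifs <;> linarith) (by positivity)

/-- In the planted hypergraph model (potential hyperedges are pairs
`e = (J, σ)` with `J ∈ X = {(N_H(i,1), …, N_H(i,k)) : i ∈ [m]}` and
`σ ∈ Σ^k`; the sample consists of independent inclusion coins `ω.1 e`, each `true`
with probability `p = 1/|Γ|`, together with a uniform secret `ω.2 ∈ Σ^n`, and the
hyperedge `e` is present, `Y_e = 1`, iff its coin came up or it is planted, i.e.
`σ_ℓ = s_{J_ℓ}` for all `ℓ`), with `φ(0) = −√(p/(1−p))` and `φ(1) = √((1−p)/p)`: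
for every nonempty set `S` of potential hyperedges,
`E_P[∏_{e∈S} φ(Y_e)] ≤ |Γ|^{|S|/2} · Pr_P[every e ∈ S is planted]`. -/
theorem stmt13 (m n k : ℕ) (H : Fin m → Fin n → ZMod 2)
    (hH : ∀ i, (Finset.univ.filter (fun j => H i j ≠ 0)).card = k)
    (Sa Γa : Type*) [Fintype Sa] [Nonempty Sa] [Fintype Γa]
    (hΓ : 2 ≤ Fintype.card Γa)
    (S : Finset ({J : Fin k → Fin n // ∃ i, J = nbr (H i) (hH i)} × (Fin k → Sa)))
    (hS : S.Nonempty) :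
    (∑ ω : (({J : Fin k → Fin n // ∃ i, J = nbr (H i) (hH i)} × (Fin k → Sa)) → Bool) ×
        (Fin n → Sa),
      ((∏ e, if ω.1 e then ((Fintype.card Γa : ℝ))⁻¹ else 1 - (Fintype.card Γa : ℝ)⁻¹) *
          (1 / (Nat.card (Fin n → Sa) : ℝ))) *
        ∏ e ∈ S,
          (if ω.1 e = true ∨ ∀ ℓ, e.2 ℓ = ω.2 (e.1.1 ℓ) then
            Real.sqrt ((1 - (Fintype.card Γa : ℝ)⁻¹) / (Fintype.card Γa : ℝ)⁻¹)
          else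
            -Real.sqrt ((Fintype.card Γa : ℝ)⁻¹ / (1 - (Fintype.card Γa : ℝ)⁻¹)))) ≤
    (Fintype.card Γa : ℝ) ^ ((S.card : ℝ) / 2) *
      prSum
        (fun ω : (({J : Fin k → Fin n // ∃ i, J = nbr (H i) (hH i)} × (Fin k → Sa)) → Bool) ×
            (Fin n → Sa) =>
          (∏ e, if ω.1 e then ((Fintype.card Γa : ℝ))⁻¹ else 1 - (Fintype.card Γa : ℝ)⁻¹) *
            (1 / (Nat.card (Fin n → Sa) : ℝ)))
        (fun ω => ∀ e ∈ S, ∀ ℓ, e.2 ℓ = ω.2 (e.1.1 ℓ)) :=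
  stmt13_general m n k H hH Sa Γa hΓ S
end
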